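/- For a nonempty finite set 𝒥 of jobs with sizes in (0, g(m)]: (1/2)·∑_{J ∈ 𝒥} r̃(𝒥)(J) ≤ ∑_{z ∈ T(z⋄(𝒥))} cn^𝒥_{z⋄(𝒥)}(z)·r(z) ≤ (15/7)·∑_{J ∈ 𝒥} r̃(𝒥)(J). -/

import Mathlib

open scoped Classical
open Finset MeasureTheory

namespace BSHM

noncomputable section

/-- The set of candidate parents of machine type `i`: types `j ∈ M` with `j > i`
and a strictly smaller normalized cost rate per capacity unit. -/
def pset (m : ℕ) (g r : ℕ → ℝ) (i : ℕ) : Set ℕ :=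
  {j | j ≤ m ∧ i < j ∧ r j / g j < r i / g i}

/-- The parent `p i` of machine type `i` (equal to `0` when the parent is undefined,
since any actual parent has index `≥ 2`). -/
def p (m : ℕ) (g r : ℕ → ℝ) (i : ℕ) : ℕ := sInf (pset m g r i)

/-- `pdef i` asserts that the parent of `i` is defined. -/
def pdef (m : ℕ) (g r : ℕ → ℝ) (i : ℕ) : Prop := (pset m g r i).Nonempty

/-- One step of the parent relation: `b` is the (defined) parent of `a`. -/
def pstep (m : ℕ) (g r : ℕ → ℝ) (a b : ℕ) : Prop :=
  pdef m g r a ∧ b = p m g r a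

/-- `P i`: the set consisting of `i` together with all of its iterated parents. -/
def P (m : ℕ) (g r : ℕ → ℝ) (i : ℕ) : Set ℕ :=
  {z | Relation.ReflTransGen (pstep m g r) i z}

/-- `A i`: the set of nodes in the tree rooted at `i`,
i.e. all `z ∈ M` having `i` as an ancestor (or equal to `i`). -/
def A (m : ℕ) (g r : ℕ → ℝ) (i : ℕ) : Set ℕ :=
  {z | 1 ≤ z ∧ z ≤ m ∧ i ∈ P m g r z}

/-- `v i`: the lowest-indexed node in the tree rooted at `i`. -/
def v (m : ℕ) (g r : ℕ → ℝ) (i : ℕ) : ℕ := sInf (A m g r i)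

/-- `y i`: the younger siblings of `i` (same parent status, smaller index). -/
def y (m : ℕ) (g r : ℕ → ℝ) (i : ℕ) : Set ℕ :=
  {z | 1 ≤ z ∧ z ≤ m ∧ z < i ∧ p m g r z = p m g r i}

/-- `esib i`: the elder siblings of `i`. -/
def esib (m : ℕ) (g r : ℕ → ℝ) (i : ℕ) : Set ℕ :=
  {z | 1 ≤ z ∧ z ≤ m ∧ i < z ∧ p m g r z = p m g r i}

/-- `T k := {k} ∪ ⋃_{z ∈ P(k)} y(z)`. -/
def T (m : ℕ) (g r : ℕ → ℝ) (k : ℕ) : Set ℕ :=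
  {k} ∪ ⋃ z ∈ P m g r k, y m g r z

/-- `T k` as a `Finset` (all relevant nodes lie in `{k} ∪ [1, m]`). -/
def TIcc (m : ℕ) (g r : ℕ → ℝ) (k : ℕ) : Finset ℕ :=
  (insert k (Finset.Icc 1 m)).filter (fun z => z ∈ T m g r k)

/-! ### Jobs and one-shot scheduling -/

variable {ι : Type*}

/-- The exact machine type of a job `J`: the least `z ∈ M` with `s J ≤ g z`. -/
def mty (m : ℕ) (g : ℕ → ℝ) (s : ι → ℝ) (J : ι) : ℕ :=
  sInf {z | 1 ≤ z ∧ z ≤ m ∧ s J ≤ g z}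

/-- Total size of a finite set of jobs. -/
def Ssum (s : ι → ℝ) (W : Finset ι) : ℝ := ∑ J ∈ W, s J

/-- `k0f X`: the highest-indexed exact machine type among the jobs of `X`. -/
def k0f (m : ℕ) (g : ℕ → ℝ) (s : ι → ℝ) (X : Finset ι) : ℕ :=
  X.sup (fun J => mty m g s J)

/-- `H z X`: the jobs of `X` whose exact machine type lies in the tree rooted at `z`. -/
def H (m : ℕ) (g r : ℕ → ℝ) (s : ι → ℝ) (z : ℕ) (X : Finset ι) : Finset ι :=
  X.filter (fun J => mty m g s J ∈ A m g r z)

/-- `SH X z := S(H_z(X))`. -/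
def SH (m : ℕ) (g r : ℕ → ℝ) (s : ι → ℝ) (X : Finset ι) (z : ℕ) : ℝ :=
  Ssum s (H m g r s z X)

/-- Feasibility of a machine configuration `w : M → ℕ` for the job set `X`. -/
def Feasible (m : ℕ) (g : ℕ → ℝ) (s : ι → ℝ) (X : Finset ι) (w : ℕ → ℕ) : Prop :=
  ∀ i, 1 ≤ i → i ≤ m →
    Ssum s (X.filter (fun J => i ≤ mty m g s J)) ≤ ∑ z ∈ Finset.Icc i m, (w z : ℝ) * g z

/-- The cost of a machine configuration. -/
def cost (m : ℕ) (r : ℕ → ℝ) (w : ℕ → ℕ) : ℝ :=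
  ∑ z ∈ Finset.Icc 1 m, (w z : ℝ) * r z

/-- The optimal one-shot scheduling cost for a job set `X`. -/
def OPT1 (m : ℕ) (g r : ℕ → ℝ) (s : ι → ℝ) (X : Finset ι) : ℝ :=
  sInf {c : ℝ | ∃ w : ℕ → ℕ, Feasible m g s X w ∧ c = cost m r w}

/-- The fractional machine configuration `cn_{z*}` for the job set `X`, with
highest-indexed machine type `zs`.  A node `i ∈ T(zs) \ {zs}` is the boundary
type `i*` exactly when `∑_{z ∈ T(zs), z > i} S(H_z) ≤ cn(zs)·g(zs) <
∑_{z ∈ T(zs), z ≥ i} S(H_z)`; nodes above the boundary get `0`,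
nodes below it get `S(H_i)/g_i`. -/
def cn (m : ℕ) (g r : ℕ → ℝ) (s : ι → ℝ) (X : Finset ι) (zs i : ℕ) : ℝ :=
  let B : ℝ := (⌈SH m g r s X zs / g zs⌉₊ : ℝ) * g zs
  let Sge : ℝ := ∑ z ∈ (TIcc m g r zs).filter (fun z => i ≤ z), SH m g r s X z
  let Sgt : ℝ := ∑ z ∈ (TIcc m g r zs).filter (fun z => i < z), SH m g r s X z
  if i = zs then (⌈SH m g r s X zs / g zs⌉₊ : ℝ)
  else if i ∈ T m g r zs then
    (if Sgt ≤ B ∧ B < Sge then (Sge - B) / g i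
     else if B < Sgt then SH m g r s X i / g i
     else 0)
  else 0

/-- `cn_{zs}` is decent: for every strict ancestor `zt` of `zs`, the total cost of
the machines of types in `T(zs) ∩ A(zt)` is at most the cost of one type-`zt` machine. -/
def decent (m : ℕ) (g r : ℕ → ℝ) (s : ι → ℝ) (X : Finset ι) (zs : ℕ) : Prop :=
  ∀ zt ∈ P m g r zs, zt ≠ zs →
    (∑ z ∈ (TIcc m g r zs).filter (fun z => z ∈ A m g r zt), cn m g r s X zs z * r z) ≤ r zt

/-- `z⋄(X)`: the least `z* ∈ P(k0(X))` such that `cn_{z*}` is decent. -/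
def zdia (m : ℕ) (g r : ℕ → ℝ) (s : ι → ℝ) (X : Finset ι) : ℕ :=
  sInf {zs | zs ∈ P m g r (k0f m g s X) ∧ decent m g r s X zs}

/-- The child of `zd` whose subtree contains node `k`. -/
def chil (m : ℕ) (g r : ℕ → ℝ) (zd k : ℕ) : ℕ :=
  sInf {i | p m g r i = zd ∧ k ∈ A m g r i}

/-- The node `i ∈ T(zd)` whose subtree contains node `k`. -/
def idxT (m : ℕ) (g r : ℕ → ℝ) (zd k : ℕ) : ℕ :=
  sInf {i | i ∈ T m g r zd ∧ k ∈ A m g r i}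

/-- The children `f(zd)` of node `zd`, as a `Finset`. -/
def fchFin (m : ℕ) (g r : ℕ → ℝ) (zd : ℕ) : Finset ℕ :=
  (Finset.Icc 1 m).filter (fun z => p m g r z = zd)

/-- The cost `r̃(X)(J)` charged to the job `J` of the job set `X`. -/
def charge (m : ℕ) (g r : ℕ → ℝ) (s : ι → ℝ) (X : Finset ι) (J : ι) : ℝ :=
  let zd := zdia m g r s X
  let ρ : ℕ → ℝ := fun i => r i / g i
  let Hh := X.filter (fun J' => mty m g s J' = zd)
  let c : ℝ := Ssum s Hh * ρ zd + ∑ i ∈ fchFin m g r zd, SH m g r s X i * ρ i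
  if mty m g s J ∈ A m g r zd then
    if g zd ≤ SH m g r s X zd then s J * ρ zd
    else if r zd < c then
      if mty m g s J = zd then s J * ρ zd
      else
        s J * (ρ (chil m g r zd (mty m g s J)) -
          (ρ (chil m g r zd (mty m g s J)) - ρ zd) *
            ((c - r zd) /
              (∑ i ∈ fchFin m g r zd, ∑ J' ∈ H m g r s i X, s J' * (ρ i - ρ zd))))
    else
      if mty m g s J = zd then s J * ρ zd * (1 + (r zd - c) / (Ssum s Hh * ρ zd))
      else s J * ρ (chil m g r zd (mty m g s J))
  else s J * ρ (idxT m g r zd (mty m g s J))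

end

end BSHM

/-!
Write `n = ⌈S(H_{z⋄})/g(z⋄)⌉` and `ρ(i) = r(i)/g(i)`. Every job below a node `i ∈ T(z⋄)`,
`i ≠ z⋄`, is charged at rate `ρ(i)`, so both sides split into the `z⋄`-subtree and the other
`T(z⋄)`-nodes, where `cn` costs at most the charge. The `n` machines of type `z⋄` have spare
capacity, which `cn` fills with the loads of the other `T(z⋄)`-nodes from the top index down; these
absorbed loads telescope to at most `n·g(z⋄)` and `ρ(i) ≤ ρ(z⋄)` on `T(z⋄)`, which gives the lower
bound. For the upper bound, `n·r(z⋄)` is at most twice the charge of the `z⋄`-subtree when that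
subtree fills a machine, and equals it in the generic underloaded cases. In the remaining case no
job has exact type `z⋄`, so the child `z'` of `z⋄` towards `k0` is not decent: the `cn_{z'}`
configuration costs more than `r(z⋄)`, yet at most `r(z') + c + ∑ S(H_i)ρ(i)`, and
`r(z') ≤ r(z⋄)/8` because rates are powers of 8.
-/

lemma Finset.sum_eq_sum_sum_of_existsUnique {ι κ M : Type*} [AddCommMonoid M]
    {X : Finset ι} {t : Finset κ} {Y : κ → Finset ι} (hY : ∀ i ∈ t, Y i ⊆ X)
    (hX : ∀ J ∈ X, ∃! i, i ∈ t ∧ J ∈ Y i) (F : ι → M) :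
    ∑ J ∈ X, F J = ∑ i ∈ t, ∑ J ∈ Y i, F J := by
  have hdisj : (t : Set κ).PairwiseDisjoint Y := fun i hi j hj hij =>
    disjoint_left.mpr fun J hJi hJj =>
      hij ((hX J (hY i hi hJi)).unique ⟨hi, hJi⟩ ⟨hj, hJj⟩)
  rw [← sum_biUnion hdisj]
  congr 1
  ext J
  simp only [mem_biUnion]
  exact ⟨fun hJ => (hX J hJ).exists, fun ⟨i, hi, hJ⟩ => hY i hi hJ⟩

lemma Finset.sum_le_sum_add_sum_of_subset_union {ι : Type*} [DecidableEq ι] {f : ι → ℝ}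
    {s t u : Finset ι} (h : s ⊆ t ∪ u) (hf : ∀ i ∈ t ∪ u, 0 ≤ f i) :
    ∑ i ∈ s, f i ≤ ∑ i ∈ t, f i + ∑ i ∈ u, f i := by
  rw [← sum_union_inter]
  exact (sum_le_sum_of_subset_of_nonneg h fun i hi _ => hf i hi).trans
    (le_add_of_nonneg_right (sum_nonneg fun i hi => hf i (inter_subset_union hi)))

lemma Antitone.sum_sub_succ_le {φ : ℕ → ℝ} (hφ : Antitone φ) {G : Finset ℕ} {N : ℕ}
    (hG : ∀ z ∈ G, z < N) : ∑ z ∈ G, (φ z - φ (z + 1)) ≤ φ 0 - φ N :=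
  calc ∑ z ∈ G, (φ z - φ (z + 1))
      ≤ ∑ z ∈ range N, (φ z - φ (z + 1)) :=
        sum_le_sum_of_subset_of_nonneg (fun z hz => mem_range.mpr (hG z hz))
          fun z _ _ => sub_nonneg.mpr (hφ z.le_succ)
    _ = φ 0 - φ N := sum_range_sub' φ N

namespace BSHM

structure MachineTypes (m : ℕ) (g r : ℕ → ℝ) : Prop where
  one_le : 1 ≤ m
  g_one_pos : 0 < g 1
  r_one_pos : 0 < r 1
  g_lt : ∀ i j, 1 ≤ i → i < j → j ≤ m → g i < g j
  r_lt : ∀ i j, 1 ≤ i → i < j → j ≤ m → r i < r j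
  r_eq_zpow : ∀ z, 1 ≤ z → z ≤ m → ∃ n : ℤ, r z = (8 : ℝ) ^ n

namespace MachineTypes

variable {m : ℕ} {g r : ℕ → ℝ} (hM : MachineTypes m g r) {i j : ℕ}
include hM

lemma g_pos (hi : 1 ≤ i) (him : i ≤ m) : 0 < g i := by
  rcases hi.eq_or_lt with rfl | hi
  · exact hM.g_one_pos
  · exact hM.g_one_pos.trans (hM.g_lt 1 i le_rfl hi him)

lemma r_pos (hi : 1 ≤ i) (him : i ≤ m) : 0 < r i := by
  rcases hi.eq_or_lt with rfl | hi
  · exact hM.r_one_pos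
  · exact hM.r_one_pos.trans (hM.r_lt 1 i le_rfl hi him)

lemma rate_pos (hi : 1 ≤ i) (him : i ≤ m) : 0 < r i / g i :=
  div_pos (hM.r_pos hi him) (hM.g_pos hi him)

lemma r_le (hi : 1 ≤ i) (hij : i ≤ j) (hj : j ≤ m) : r i ≤ r j := by
  rcases hij.eq_or_lt with rfl | hij
  · exact le_rfl
  · exact (hM.r_lt i j hi hij hj).le

lemma eight_mul_r_le (hi : 1 ≤ i) (hij : i < j) (hj : j ≤ m) : 8 * r i ≤ r j := by
  obtain ⟨a, ha⟩ := hM.r_eq_zpow i hi (by omega)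
  obtain ⟨b, hb⟩ := hM.r_eq_zpow j (by omega) hj
  have hlt := hM.r_lt i j hi hij hj
  rw [ha, hb] at hlt ⊢
  have hab : a < b := (zpow_lt_zpow_iff_right₀ (by norm_num)).mp hlt
  calc 8 * (8 : ℝ) ^ a = 8 ^ (a + 1) := by rw [zpow_add_one₀ (by norm_num)]; ring
    _ ≤ 8 ^ b := zpow_le_zpow_right₀ (by norm_num) (by omega)

end MachineTypes

section Tree

variable {m : ℕ} {g r : ℕ → ℝ} {a b i j k x z : ℕ}

lemma lt_p (h : pdef m g r i) : i < p m g r i := (Nat.sInf_mem h).2.1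

lemma p_le (h : pdef m g r i) : p m g r i ≤ m := (Nat.sInf_mem h).1

lemma rate_p_lt (h : pdef m g r i) : r (p m g r i) / g (p m g r i) < r i / g i :=
  (Nat.sInf_mem h).2.2

lemma p_le_of_mem_pset (h : j ∈ pset m g r i) : p m g r i ≤ j := Nat.sInf_le h

lemma p_eq_zero (h : ¬ pdef m g r i) : p m g r i = 0 := by
  rw [p, Set.not_nonempty_iff_eq_empty.mp h, Nat.sInf_empty]

lemma pdef_of_p_pos (h : 0 < p m g r i) : pdef m g r i :=
  by_contra fun hc => h.ne' (p_eq_zero hc)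

lemma lt_of_p_eq (h : p m g r i = z) (hz : 0 < z) : i < z :=
  h ▸ lt_p (pdef_of_p_pos (h ▸ hz))

lemma self_mem_P : k ∈ P m g r k := Relation.ReflTransGen.refl

lemma p_mem_P (h : pdef m g r k) : p m g r k ∈ P m g r k := .single ⟨h, rfl⟩

lemma P_trans (h₁ : z ∈ P m g r k) (h₂ : j ∈ P m g r z) : j ∈ P m g r k := h₁.trans h₂

lemma le_of_mem_P (h : z ∈ P m g r k) : k ≤ z := by
  induction h with
  | refl => exact le_rfl
  | tail _ hst ih => exact ih.trans (hst.2 ▸ lt_p hst.1).le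

lemma le_m_of_mem_P (hk : k ≤ m) (h : z ∈ P m g r k) : z ≤ m := by
  induction h with
  | refl => exact hk
  | tail _ hst _ => exact hst.2 ▸ p_le hst.1

lemma mem_P_p_of_ne (h : z ∈ P m g r k) (hne : z ≠ k) :
    pdef m g r k ∧ z ∈ P m g r (p m g r k) := by
  rcases Relation.ReflTransGen.cases_head h with h | ⟨c, hc, hcz⟩
  · exact absurd h.symm hne
  · exact ⟨hc.1, hc.2 ▸ hcz⟩

lemma exists_p_eq_of_mem_P (h : z ∈ P m g r k) (hne : z ≠ k) :
    ∃ w ∈ P m g r k, pdef m g r w ∧ p m g r w = z := by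
  rcases Relation.ReflTransGen.cases_tail h with h | ⟨c, hc, hcz⟩
  · exact absurd h hne
  · exact ⟨c, hc, hcz.1, hcz.2.symm⟩

lemma P_total (ha : a ∈ P m g r k) (hb : b ∈ P m g r k) :
    a ∈ P m g r b ∨ b ∈ P m g r a :=
  Relation.ReflTransGen.total_of_right_unique (fun _ _ _ h₁ h₂ => h₁.2.trans h₂.2.symm) hb ha

lemma exists_root_mem_P (hk : k ≤ m) : ∃ a ∈ P m g r k, ¬ pdef m g r a := by
  have hbdd : BddAbove (P m g r k) := ⟨m, fun _ hz => le_m_of_mem_P hk hz⟩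
  have hmem := Nat.sSup_mem ⟨k, self_mem_P⟩ hbdd
  refine ⟨_, hmem, fun hd => ?_⟩
  have := le_csSup hbdd (P_trans hmem (p_mem_P hd))
  have := lt_p hd
  omega

lemma rate_le_of_mem_P (h : z ∈ P m g r k) : r z / g z ≤ r k / g k := by
  induction h with
  | refl => exact le_rfl
  | tail _ hst ih => exact (hst.2 ▸ rate_p_lt hst.1).le.trans ih

lemma rate_le_of_mem_y (h : z ∈ y m g r i) (hi : i ≤ m) : r z / g z ≤ r i / g i := by
  obtain ⟨-, -, hzi, hp⟩ := h
  by_contra hc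
  have hi_pset : i ∈ pset m g r z := ⟨hi, hzi, not_le.mp hc⟩
  have hpz : z < p m g r z := lt_p ⟨i, hi_pset⟩
  have hpi : i < p m g r i := lt_p (pdef_of_p_pos (by rw [← hp]; omega))
  have := p_le_of_mem_pset hi_pset
  omega

lemma not_mem_P_of_mem_y (h : z ∈ y m g r a) : a ∉ P m g r z := by
  obtain ⟨-, -, hza, hp⟩ := h
  intro ha
  obtain ⟨hdz, ha⟩ := mem_P_p_of_ne ha (by omega)
  have hda : pdef m g r a := pdef_of_p_pos (hp ▸ (Nat.zero_le z).trans_lt (lt_p hdz))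
  have := le_of_mem_P ha
  have := lt_p hda
  omega

lemma mem_T : z ∈ T m g r k ↔ z = k ∨ ∃ a ∈ P m g r k, z ∈ y m g r a := by
  simp only [T, Set.mem_union, Set.mem_singleton_iff, Set.mem_iUnion, exists_prop]

lemma self_mem_T : k ∈ T m g r k := mem_T.mpr (Or.inl rfl)

lemma mem_Icc_of_mem_T (hk1 : 1 ≤ k) (hk2 : k ≤ m) (hz : z ∈ T m g r k) :
    1 ≤ z ∧ z ≤ m := by
  rcases mem_T.mp hz with rfl | ⟨a, _, hz⟩
  · exact ⟨hk1, hk2⟩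
  · exact ⟨hz.1, hz.2.1⟩

lemma mem_TIcc (hk1 : 1 ≤ k) (hk2 : k ≤ m) : z ∈ TIcc m g r k ↔ z ∈ T m g r k := by
  refine ⟨fun h => (mem_filter.mp h).2, fun h => mem_filter.mpr ⟨?_, h⟩⟩
  have := mem_Icc_of_mem_T hk1 hk2 h
  exact mem_insert_of_mem (mem_Icc.mpr this)

lemma mem_Icc_of_mem_TIcc (hk1 : 1 ≤ k) (hk2 : k ≤ m) (hz : z ∈ TIcc m g r k) :
    1 ≤ z ∧ z ≤ m :=
  mem_Icc_of_mem_T hk1 hk2 (mem_filter.mp hz).2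

lemma self_mem_TIcc (hk1 : 1 ≤ k) (hk2 : k ≤ m) : k ∈ TIcc m g r k :=
  (mem_TIcc hk1 hk2).mpr self_mem_T

lemma rate_le_of_mem_T (hk : k ≤ m) (hz : z ∈ T m g r k) : r z / g z ≤ r k / g k := by
  rcases mem_T.mp hz with rfl | ⟨a, ha, hza⟩
  · exact le_rfl
  · exact (rate_le_of_mem_y hza (le_m_of_mem_P hk ha)).trans (rate_le_of_mem_P ha)

lemma eq_of_mem_P_of_mem_T (hz : z ∈ P m g r k) (hzT : z ∈ T m g r k) : z = k := by
  rcases mem_T.mp hzT with h | ⟨b, hb, hzb⟩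
  · exact h
  rcases P_total hz hb with h | h
  · have := le_of_mem_P h
    have := hzb.2.2.1
    omega
  · exact absurd h (not_mem_P_of_mem_y hzb)

lemma P_p_subset_of_mem_T (hi : i ∈ T m g r k) (hd : pdef m g r i) :
    P m g r (p m g r i) ⊆ P m g r k ∧ k < p m g r i := by
  rcases mem_T.mp hi with rfl | ⟨a, ha, hia⟩
  · exact ⟨fun _ => P_trans (p_mem_P hd), lt_p hd⟩
  obtain ⟨-, -, hia_lt, hp⟩ := hia
  have hda : pdef m g r a := pdef_of_p_pos (hp ▸ (Nat.zero_le i).trans_lt (lt_p hd))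
  rw [hp]
  exact ⟨fun _ => P_trans (P_trans ha (p_mem_P hda)),
    (le_of_mem_P ha).trans_lt (lt_p hda)⟩

lemma mem_P_p_of_mem_A (hi : x ∈ A m g r i) (hj : x ∈ A m g r j) (hij : i ≠ j) :
    (pdef m g r i ∧ j ∈ P m g r (p m g r i)) ∨ (pdef m g r j ∧ i ∈ P m g r (p m g r j)) :=
  (P_total hi.2.2 hj.2.2).symm.imp (mem_P_p_of_ne · hij.symm) (mem_P_p_of_ne · hij)

lemma disjoint_A_of_mem_T (hi : i ∈ T m g r k) (hj : j ∈ T m g r k) (hij : i ≠ j) :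
    Disjoint (A m g r i) (A m g r j) := by
  have key : ∀ {i j}, i ∈ T m g r k → j ∈ T m g r k → pdef m g r i →
      j ∉ P m g r (p m g r i) := by
    intro i j hi hj hd hji
    obtain ⟨hsub, hlt⟩ := P_p_subset_of_mem_T hi hd
    have := eq_of_mem_P_of_mem_T (hsub hji) hj
    have := le_of_mem_P hji
    omega
  refine Set.disjoint_left.mpr fun x hxi hxj => ?_
  rcases mem_P_p_of_mem_A hxi hxj hij with ⟨hd, h⟩ | ⟨hd, h⟩
  · exact key hi hj hd h
  · exact key hj hi hd h

/-- The witness is the highest ancestor of `k` below `p x`. -/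
lemma exists_mem_y_of_lt_p (hk : k ≤ m) (hx : 1 ≤ x) (hxk : x < k) (hd : pdef m g r x)
    (hkq : k < p m g r x) : ∃ b ∈ P m g r k, x ∈ y m g r b := by
  set q := p m g r x
  set S := {b | b ∈ P m g r k ∧ b < q}
  have hbdd : BddAbove S := ⟨q, fun _ hb => hb.2.le⟩
  obtain ⟨hbP, hbq⟩ : sSup S ∈ S := Nat.sSup_mem ⟨k, self_mem_P, hkq⟩ hbdd
  set b := sSup S
  have hkb := le_of_mem_P hbP
  have hq := Nat.sInf_mem hd
  have hrate : r x / g x ≤ r b / g b := by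
    by_contra hc
    have := p_le_of_mem_pset (⟨le_m_of_mem_P hk hbP, by omega, not_le.mp hc⟩ :
      b ∈ pset m g r x)
    omega
  have hq_pset : q ∈ pset m g r b := ⟨hq.1, hbq, hq.2.2.trans_le hrate⟩
  have hdb : pdef m g r b := ⟨q, hq_pset⟩
  have hpb : p m g r b = q := by
    refine le_antisymm (p_le_of_mem_pset hq_pset) (not_lt.mp fun hlt => ?_)
    have := le_csSup hbdd ⟨P_trans hbP (p_mem_P hdb), hlt⟩
    have := lt_p hdb
    omega
  exact ⟨b, hbP, hx, by omega, by omega, hpb.symm⟩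

/-- The witness is `k` or the highest ancestor of `x` below `k`. -/
lemma exists_mem_T_mem_A (hk : k ≤ m) (hx : 1 ≤ x) (hxk : x ≤ k) :
    ∃ i ∈ T m g r k, x ∈ A m g r i := by
  by_cases hkx : k ∈ P m g r x
  · exact ⟨k, self_mem_T, hx, by omega, hkx⟩
  set S := {w | w ∈ P m g r x ∧ w < k}
  have hbdd : BddAbove S := ⟨k, fun _ hw => hw.2.le⟩
  have hxk' : x < k := lt_of_le_of_ne hxk fun h => hkx (h ▸ self_mem_P)
  obtain ⟨hwP, hwk⟩ : sSup S ∈ S := Nat.sSup_mem ⟨x, self_mem_P, hxk'⟩ hbdd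
  set w := sSup S
  have hxw := le_of_mem_P hwP
  refine ⟨w, mem_T.mpr (Or.inr ?_), hx, by omega, hwP⟩
  by_cases hd : pdef m g r w
  · have hpw : k < p m g r w := by
      have hpP := P_trans hwP (p_mem_P hd)
      refine lt_of_le_of_ne (not_lt.mp fun hlt => ?_) fun h => hkx (h ▸ hpP)
      have := le_csSup hbdd ⟨hpP, hlt⟩
      have := lt_p hd
      omega
    exact exists_mem_y_of_lt_p hk (by omega) hwk hd hpw
  · obtain ⟨a, ha, hda⟩ := exists_root_mem_P (m := m) (g := g) (r := r) hk
    have := le_of_mem_P ha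
    exact ⟨a, ha, by omega, by omega, by omega, by rw [p_eq_zero hd, p_eq_zero hda]⟩

lemma idxT_eq (hi : i ∈ T m g r k) (hx : x ∈ A m g r i) : idxT m g r k x = i := by
  have hmem : idxT m g r k x ∈ {j | j ∈ T m g r k ∧ x ∈ A m g r j} := Nat.sInf_mem ⟨i, hi, hx⟩
  by_contra hne
  exact Set.disjoint_left.mp (disjoint_A_of_mem_T hmem.1 hi hne) hmem.2 hx

lemma mem_A_of_p_eq (hz : 0 < z) (hi : p m g r i = z) (hx : x ∈ A m g r i) :
    x ∈ A m g r z :=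
  ⟨hx.1, hx.2.1, P_trans hx.2.2 (hi ▸ p_mem_P (pdef_of_p_pos (hi ▸ hz)))⟩

lemma not_mem_A_of_p_eq (hz : 0 < z) (hi : p m g r i = z) : z ∉ A m g r i := fun h => by
  have := le_of_mem_P h.2.2
  have := lt_of_p_eq hi hz
  omega

lemma exists_p_eq_mem_A (hx : x ∈ A m g r z) (hne : x ≠ z) :
    ∃ i, p m g r i = z ∧ x ∈ A m g r i := by
  obtain ⟨w, hw, -, hpw⟩ := exists_p_eq_of_mem_P hx.2.2 hne.symm
  exact ⟨w, hpw, hx.1, hx.2.1, hw⟩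

lemma disjoint_A_of_p_eq (hz : 0 < z) (hi : p m g r i = z) (hj : p m g r j = z) (hij : i ≠ j) :
    Disjoint (A m g r i) (A m g r j) := by
  refine Set.disjoint_left.mpr fun x hxi hxj => ?_
  rcases mem_P_p_of_mem_A hxi hxj hij with ⟨-, h⟩ | ⟨-, h⟩
  · have := le_of_mem_P (hi ▸ h)
    have := lt_of_p_eq hj hz
    omega
  · have := le_of_mem_P (hj ▸ h)
    have := lt_of_p_eq hi hz
    omega

lemma chil_eq (hz : 0 < z) (hi : p m g r i = z) (hx : x ∈ A m g r i) : chil m g r z x = i := by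
  have hmem : chil m g r z x ∈ {j | p m g r j = z ∧ x ∈ A m g r j} := Nat.sInf_mem ⟨i, hi, hx⟩
  by_contra hne
  exact Set.disjoint_left.mp (disjoint_A_of_p_eq hz hmem.1 hi hne) hmem.2 hx

lemma TIcc_erase_subset_of_p_eq (hz : 0 < z) (hpj : p m g r j = z) :
    (TIcc m g r j).erase j ⊆ (fchFin m g r z).erase j ∪ (TIcc m g r z).erase z := by
  intro i hi
  obtain ⟨hne, hiT⟩ := mem_erase.mp hi
  obtain ⟨a, ha, hia⟩ := (mem_T.mp (mem_filter.mp hiT).2).resolve_left hne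
  by_cases haj : a = j
  · subst haj
    exact mem_union_left _ (mem_erase.mpr ⟨hne,
      mem_filter.mpr ⟨mem_Icc.mpr ⟨hia.1, hia.2.1⟩, hia.2.2.2.trans hpj⟩⟩)
  obtain ⟨-, ha⟩ := mem_P_p_of_ne ha haj
  rw [hpj] at ha
  have hzm : z ≤ m := hpj ▸ p_le (pdef_of_p_pos (hpj ▸ hz))
  have hiT : i ∈ T m g r z := mem_T.mpr (Or.inr ⟨a, ha, hia⟩)
  refine mem_union_right _ (mem_erase.mpr ⟨?_, (mem_TIcc hz hzm).mpr hiT⟩)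
  rintro rfl
  exact not_mem_P_of_mem_y hia ha

end Tree

section Jobs

variable {ι : Type*} {m : ℕ} {g r : ℕ → ℝ} {s : ι → ℝ} {X : Finset ι}

lemma mty_spec (hm : 1 ≤ m) {J : ι} (hJ : s J ≤ g m) :
    1 ≤ mty m g s J ∧ mty m g s J ≤ m ∧ s J ≤ g (mty m g s J) :=
  Nat.sInf_mem (s := {z | 1 ≤ z ∧ z ≤ m ∧ s J ≤ g z}) ⟨m, hm, le_rfl, hJ⟩

lemma sum_eq_Ssum_mul {W : Finset ι} {F : ι → ℝ} {κ : ℝ} (h : ∀ J ∈ W, F J = s J * κ) :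
    ∑ J ∈ W, F J = Ssum s W * κ := by
  rw [sum_congr rfl h, Ssum, sum_mul]

lemma SH_nonneg (hs : ∀ J ∈ X, 0 ≤ s J) (z : ℕ) : 0 ≤ SH m g r s X z :=
  sum_nonneg fun J hJ => hs J (mem_filter.mp hJ).1

variable (hm : 1 ≤ m) (hX : X.Nonempty) (hs : ∀ J ∈ X, 0 < s J ∧ s J ≤ g m)
include hm hX hs

lemma k0f_mem_Icc : 1 ≤ k0f m g s X ∧ k0f m g s X ≤ m := by
  obtain ⟨J, hJ⟩ := hX
  exact ⟨(mty_spec hm (hs J hJ).2).1.trans (le_sup hJ),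
    Finset.sup_le fun J hJ => (mty_spec hm (hs J hJ).2).2.1⟩

lemma zdia_spec : zdia m g r s X ∈ P m g r (k0f m g s X) ∧ decent m g r s X (zdia m g r s X) := by
  obtain ⟨a, ha, hda⟩ :=
    exists_root_mem_P (m := m) (g := g) (r := r) (k0f_mem_Icc hm hX hs).2
  refine Nat.sInf_mem (s := {zs | zs ∈ P m g r (k0f m g s X) ∧ decent m g r s X zs})
    ⟨a, ha, fun zt hzt hne => absurd (mem_P_p_of_ne hzt hne).1 hda⟩

lemma zdia_mem_Icc : 1 ≤ zdia m g r s X ∧ zdia m g r s X ≤ m := by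
  have hk := k0f_mem_Icc hm hX hs
  have hzd := (zdia_spec (r := r) hm hX hs).1
  exact ⟨hk.1.trans (le_of_mem_P hzd), le_m_of_mem_P hk.2 hzd⟩

lemma mty_le_zdia {J : ι} (hJ : J ∈ X) : 1 ≤ mty m g s J ∧ mty m g s J ≤ zdia m g r s X :=
  ⟨(mty_spec hm (hs J hJ).2).1,
    (le_sup hJ).trans (le_of_mem_P (zdia_spec (r := r) hm hX hs).1)⟩

lemma sum_eq_sum_TIcc_sum_H (F : ι → ℝ) :
    ∑ J ∈ X, F J = ∑ i ∈ TIcc m g r (zdia m g r s X), ∑ J ∈ H m g r s i X, F J := by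
  obtain ⟨hzd1, hzd2⟩ := zdia_mem_Icc (r := r) hm hX hs
  refine sum_eq_sum_sum_of_existsUnique (fun _ _ => filter_subset _ _)
    (fun J hJ => ?_) F
  obtain ⟨h1, h2⟩ := mty_le_zdia (r := r) hm hX hs hJ
  obtain ⟨i, hi, hJi⟩ := exists_mem_T_mem_A hzd2 h1 h2
  refine ⟨i, ⟨(mem_TIcc hzd1 hzd2).mpr hi, mem_filter.mpr ⟨hJ, hJi⟩⟩, ?_⟩
  rintro j ⟨hj, hJj⟩
  exact (idxT_eq ((mem_TIcc hzd1 hzd2).mp hj) (mem_filter.mp hJj).2).symm.trans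
    (idxT_eq hi hJi)

end Jobs

section Configuration

variable {ι : Type*} {m : ℕ} {g r : ℕ → ℝ} {s : ι → ℝ} {X : Finset ι} {zs i : ℕ}

noncomputable def topCapacity (m : ℕ) (g r : ℕ → ℝ) (s : ι → ℝ) (X : Finset ι) (zs : ℕ) : ℝ :=
  (⌈SH m g r s X zs / g zs⌉₊ : ℝ) * g zs

noncomputable def tailLoad (m : ℕ) (g r : ℕ → ℝ) (s : ι → ℝ) (X : Finset ι) (zs i : ℕ) : ℝ :=
  ∑ z ∈ (TIcc m g r zs).filter (fun z => i ≤ z), SH m g r s X z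

/-- The spare capacity of the `zs`-machines is filled with the loads of the other
`T(zs)`-nodes in decreasing order of index; `absorbed … i` is the part of the load of node `i`
that fits there. -/
noncomputable def absorbed (m : ℕ) (g r : ℕ → ℝ) (s : ι → ℝ) (X : Finset ι) (zs i : ℕ) : ℝ :=
  min (topCapacity m g r s X zs) (tailLoad m g r s X zs i)
    - min (topCapacity m g r s X zs) (tailLoad m g r s X zs (i + 1))

lemma tailLoad_eq_add (hi : i ∈ TIcc m g r zs) :
    tailLoad m g r s X zs i = SH m g r s X i + tailLoad m g r s X zs (i + 1) := by
  rw [tailLoad, tailLoad, ← sum_insert (by simp)]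
  congr 1
  ext z
  simp only [mem_filter, mem_insert]
  constructor
  · rintro ⟨hz, hiz⟩
    rcases hiz.eq_or_lt with rfl | hlt
    · exact Or.inl rfl
    · exact Or.inr ⟨hz, hlt⟩
  · rintro (rfl | ⟨hz, hlt⟩)
    · exact ⟨hi, le_rfl⟩
    · exact ⟨hz, by omega⟩

lemma cn_mul_g_eq (hs : ∀ J ∈ X, 0 ≤ s J) (hi : i ∈ TIcc m g r zs) (hne : i ≠ zs)
    (hg : g i ≠ 0) : cn m g r s X zs i * g i = SH m g r s X i - absorbed m g r s X zs i := by
  have hSH := SH_nonneg (m := m) (g := g) (r := r) hs i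
  simp only [cn, if_neg hne, if_pos (mem_filter.mp hi).2]
  -- `i < z` unfolds to `i + 1 ≤ z`, so the sum over `z > i` in `cn` is `tailLoad … (i + 1)`.
  change (if tailLoad m g r s X zs (i + 1) ≤ topCapacity m g r s X zs ∧
      topCapacity m g r s X zs < tailLoad m g r s X zs i then
      (tailLoad m g r s X zs i - topCapacity m g r s X zs) / g i
    else if topCapacity m g r s X zs < tailLoad m g r s X zs (i + 1) then SH m g r s X i / g i
    else 0) * g i = _
  rw [absorbed, tailLoad_eq_add hi]
  split_ifs with h₁ h₂
  · rw [div_mul_cancel₀ _ hg, min_eq_left h₁.2.le, min_eq_right h₁.1]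
    ring
  · rw [div_mul_cancel₀ _ hg, min_eq_left (by linarith), min_eq_left h₂.le]
    ring
  · have h₂ := not_lt.mp h₂
    rw [zero_mul, min_eq_right (not_lt.mp fun h => h₁ ⟨h₂, h⟩), min_eq_right h₂]
    ring

lemma antitone_tailLoad (hs : ∀ J ∈ X, 0 ≤ s J) : Antitone (tailLoad m g r s X zs) :=
  fun _ _ hij => sum_le_sum_of_subset_of_nonneg
    (fun _ hz => mem_filter.mpr ⟨(mem_filter.mp hz).1,
      hij.trans (mem_filter.mp hz).2⟩) fun z _ _ => SH_nonneg hs z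

lemma absorbed_nonneg (hs : ∀ J ∈ X, 0 ≤ s J) : 0 ≤ absorbed m g r s X zs i :=
  sub_nonneg.mpr (min_le_min_left _ (antitone_tailLoad hs i.le_succ))

lemma absorbed_le_SH (hs : ∀ J ∈ X, 0 ≤ s J) (hi : i ∈ TIcc m g r zs) :
    absorbed m g r s X zs i ≤ SH m g r s X i := by
  have hSH := SH_nonneg (m := m) (g := g) (r := r) hs i
  rw [absorbed, tailLoad_eq_add hi, sub_le_iff_le_add]
  calc min (topCapacity m g r s X zs) (SH m g r s X i + tailLoad m g r s X zs (i + 1))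
      ≤ min (SH m g r s X i + topCapacity m g r s X zs)
          (SH m g r s X i + tailLoad m g r s X zs (i + 1)) := min_le_min_right _ (by linarith)
    _ = _ := min_add_add_left _ _ _

lemma sum_absorbed_le (hs : ∀ J ∈ X, 0 ≤ s J) (hg : 0 ≤ g zs) (G : Finset ℕ) :
    ∑ z ∈ G, absorbed m g r s X zs z ≤ topCapacity m g r s X zs := by
  have hB : 0 ≤ topCapacity m g r s X zs := mul_nonneg (Nat.cast_nonneg _) hg
  have hφ : Antitone fun n => min (topCapacity m g r s X zs) (tailLoad m g r s X zs n) :=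
    fun _ _ hij => min_le_min_left _ (antitone_tailLoad hs hij)
  have hN : ∀ z ∈ G, z < G.sup id + 1 := fun z hz => Nat.lt_succ_of_le (le_sup (f := id) hz)
  refine (Antitone.sum_sub_succ_le hφ hN).trans ?_
  have : 0 ≤ tailLoad m g r s X zs (G.sup id + 1) :=
    sum_nonneg fun z _ => SH_nonneg hs z
  linarith [min_le_left (topCapacity m g r s X zs) (tailLoad m g r s X zs 0), le_min hB this]

lemma sum_TIcc_cn_mul_r (hzs1 : 1 ≤ zs) (hzs2 : zs ≤ m) :
    ∑ z ∈ TIcc m g r zs, cn m g r s X zs z * r z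
      = ⌈SH m g r s X zs / g zs⌉₊ * r zs
        + ∑ z ∈ (TIcc m g r zs).erase zs, cn m g r s X zs z * r z := by
  rw [← add_sum_erase _ _ (self_mem_TIcc hzs1 hzs2)]
  simp only [cn, if_true]

variable (hM : MachineTypes m g r) (hs : ∀ J ∈ X, 0 ≤ s J)
include hM hs

lemma SH_mul_rate_nonneg (hi1 : 1 ≤ i) (hi2 : i ≤ m) : 0 ≤ SH m g r s X i * (r i / g i) :=
  mul_nonneg (SH_nonneg hs i) (hM.rate_pos hi1 hi2).le

section

variable (hzs1 : 1 ≤ zs) (hzs2 : zs ≤ m)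
include hzs1 hzs2

lemma sum_erase_SH_mul_rate_nonneg :
    0 ≤ ∑ i ∈ (TIcc m g r zs).erase zs, SH m g r s X i * (r i / g i) :=
  sum_nonneg fun _ hi => SH_mul_rate_nonneg hM hs
    (mem_Icc_of_mem_TIcc hzs1 hzs2 (mem_of_mem_erase hi)).1
    (mem_Icc_of_mem_TIcc hzs1 hzs2 (mem_of_mem_erase hi)).2

lemma cn_mul_r_eq (hi : i ∈ TIcc m g r zs) (hne : i ≠ zs) :
    cn m g r s X zs i * r i = (SH m g r s X i - absorbed m g r s X zs i) * (r i / g i) := by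
  obtain ⟨hi1, hi2⟩ := mem_Icc_of_mem_TIcc hzs1 hzs2 hi
  have hg := (hM.g_pos hi1 hi2).ne'
  rw [← cn_mul_g_eq hs hi hne hg]
  field_simp

lemma cn_nonneg (hi : i ∈ TIcc m g r zs) : 0 ≤ cn m g r s X zs i := by
  by_cases hne : i = zs
  · subst hne
    simp only [cn, if_true]
    positivity
  obtain ⟨hi1, hi2⟩ := mem_Icc_of_mem_TIcc hzs1 hzs2 hi
  have hg := hM.g_pos hi1 hi2
  refine (mul_nonneg_iff_of_pos_right hg).mp ?_
  rw [cn_mul_g_eq hs hi hne hg.ne']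
  linarith [absorbed_le_SH hs hi]

lemma cn_mul_r_le (hi : i ∈ TIcc m g r zs) (hne : i ≠ zs) :
    cn m g r s X zs i * r i ≤ SH m g r s X i * (r i / g i) := by
  obtain ⟨hi1, hi2⟩ := mem_Icc_of_mem_TIcc hzs1 hzs2 hi
  rw [cn_mul_r_eq hM hs hzs1 hzs2 hi hne]
  exact mul_le_mul_of_nonneg_right
    (by linarith [absorbed_nonneg (m := m) (g := g) (r := r) (zs := zs) (i := i) hs])
    (hM.rate_pos hi1 hi2).le

lemma SH_mul_rate_sub_le (hi : i ∈ TIcc m g r zs) (hne : i ≠ zs) :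
    SH m g r s X i * (r i / g i) - 2 * (cn m g r s X zs i * r i)
      ≤ r zs / g zs * absorbed m g r s X zs i := by
  obtain ⟨hi1, hi2⟩ := mem_Icc_of_mem_TIcc hzs1 hzs2 hi
  have hu := absorbed_nonneg (i := i) (zs := zs) (m := m) (g := g) (r := r) hs
  have huSH := absorbed_le_SH hs hi
  have hrate : r i / g i ≤ r zs / g zs := rate_le_of_mem_T hzs2 (mem_filter.mp hi).2
  rw [cn_mul_r_eq hM hs hzs1 hzs2 hi hne]
  calc SH m g r s X i * (r i / g i) - 2 * ((SH m g r s X i - absorbed m g r s X zs i) * (r i / g i))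
      = (2 * absorbed m g r s X zs i - SH m g r s X i) * (r i / g i) := by ring
    _ ≤ absorbed m g r s X zs i * (r i / g i) :=
        mul_le_mul_of_nonneg_right (by linarith) (hM.rate_pos hi1 hi2).le
    _ ≤ absorbed m g r s X zs i * (r zs / g zs) := mul_le_mul_of_nonneg_left hrate hu
    _ = _ := mul_comm _ _

lemma sum_SH_mul_rate_le :
    ∑ z ∈ (TIcc m g r zs).erase zs, SH m g r s X z * (r z / g z)
      ≤ 2 * ∑ z ∈ (TIcc m g r zs).erase zs, cn m g r s X zs z * r z
        + ⌈SH m g r s X zs / g zs⌉₊ * r zs := by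
  have hdef := sum_le_sum fun z hz =>
    SH_mul_rate_sub_le hM hs hzs1 hzs2 (mem_of_mem_erase hz) (ne_of_mem_erase hz)
  rw [sum_sub_distrib, ← mul_sum, ← mul_sum] at hdef
  have habs := mul_le_mul_of_nonneg_left
    (sum_absorbed_le (m := m) (r := r) hs (hM.g_pos hzs1 hzs2).le ((TIcc m g r zs).erase zs))
    (hM.rate_pos hzs1 hzs2).le
  have hcap : r zs / g zs * topCapacity m g r s X zs = ⌈SH m g r s X zs / g zs⌉₊ * r zs := by
    rw [topCapacity]
    field_simp [(hM.g_pos hzs1 hzs2).ne']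
  linarith

end

lemma sum_TIcc_cn_mul_r_le_of_p_eq {j z : ℕ} (hj1 : 1 ≤ j) (hj2 : j ≤ m) (hz : 0 < z)
    (hpj : p m g r j = z) :
    ∑ i ∈ TIcc m g r j, cn m g r s X j i * r i
      ≤ r j + ∑ i ∈ fchFin m g r z, SH m g r s X i * (r i / g i)
        + ∑ i ∈ (TIcc m g r z).erase z, SH m g r s X i * (r i / g i) := by
  have hzm : z ≤ m := hpj ▸ p_le (pdef_of_p_pos (hpj ▸ hz))
  have hceil : (⌈SH m g r s X j / g j⌉₊ : ℝ) * r j ≤ SH m g r s X j * (r j / g j) + r j := by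
    have := Nat.ceil_lt_add_one (div_nonneg (SH_nonneg (m := m) (g := g) (r := r) hs j)
      (hM.g_pos hj1 hj2).le)
    calc (⌈SH m g r s X j / g j⌉₊ : ℝ) * r j ≤ (SH m g r s X j / g j + 1) * r j :=
          mul_le_mul_of_nonneg_right this.le (hM.r_pos hj1 hj2).le
      _ = _ := by ring
  have hrest := sum_le_sum fun i hi =>
    cn_mul_r_le hM hs hj1 hj2 (X := X) (mem_of_mem_erase hi) (ne_of_mem_erase hi)
  have hsplit := sum_le_sum_add_sum_of_subset_union (TIcc_erase_subset_of_p_eq hz hpj)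
    (f := fun i => SH m g r s X i * (r i / g i)) fun i hi => by
      obtain ⟨hi1, hi2⟩ : 1 ≤ i ∧ i ≤ m := by
        rcases mem_union.mp hi with hi | hi
        · exact mem_Icc.mp (mem_filter.mp (mem_of_mem_erase hi)).1
        · exact mem_Icc_of_mem_TIcc hz hzm (mem_of_mem_erase hi)
      exact SH_mul_rate_nonneg hM hs hi1 hi2
  have hfch := add_sum_erase (fchFin m g r z) (fun i => SH m g r s X i * (r i / g i))
    (mem_filter.mpr ⟨mem_Icc.mpr ⟨hj1, hj2⟩, hpj⟩)
  rw [sum_TIcc_cn_mul_r hj1 hj2]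
  linarith

lemma r_lt_sum_cn_mul_r_of_not_decent {j z : ℕ} (hj1 : 1 ≤ j) (hj2 : j ≤ m) (hz : 0 < z)
    (hpj : p m g r j = z) (hnd : ¬ decent m g r s X j) :
    r z < ∑ i ∈ TIcc m g r j, cn m g r s X j i * r i := by
  obtain ⟨zt, hztP, hztne, hviol⟩ : ∃ zt ∈ P m g r j, zt ≠ j ∧
      r zt < ∑ i ∈ (TIcc m g r j).filter (· ∈ A m g r zt), cn m g r s X j i * r i := by
    simpa [decent] using hnd
  have hzm : z ≤ m := hpj ▸ p_le (pdef_of_p_pos (hpj ▸ hz))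
  have hzt : zt ∈ P m g r z := hpj ▸ (mem_P_p_of_ne hztP hztne).2
  have hrzt : r z ≤ r zt := hM.r_le hz (le_of_mem_P hzt) (le_m_of_mem_P hzm hzt)
  have hfilter := sum_le_sum_of_subset_of_nonneg (filter_subset (· ∈ A m g r zt) (TIcc m g r j))
    (f := fun i => cn m g r s X j i * r i) fun i hi _ => mul_nonneg (cn_nonneg hM hs hj1 hj2 hi)
      (hM.r_pos (mem_Icc_of_mem_TIcc hj1 hj2 hi).1 (mem_Icc_of_mem_TIcc hj1 hj2 hi).2).le
  linarith

end Configuration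

section Charge

variable {ι : Type*} {m : ℕ} {g r : ℕ → ℝ} {s : ι → ℝ} {X : Finset ι} {J : ι} {i : ℕ}

/-- The set `H^h(X)` of the charging scheme. -/
noncomputable def exactTop (m : ℕ) (g r : ℕ → ℝ) (s : ι → ℝ) (X : Finset ι) : Finset ι :=
  X.filter fun J => mty m g s J = zdia m g r s X

/-- The quantity `c` of the charging scheme. -/
noncomputable def childCost (m : ℕ) (g r : ℕ → ℝ) (s : ι → ℝ) (X : Finset ι) : ℝ :=
  Ssum s (exactTop m g r s X) * (r (zdia m g r s X) / g (zdia m g r s X))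
    + ∑ i ∈ fchFin m g r (zdia m g r s X), SH m g r s X i * (r i / g i)

/-- The denominator of `α*`. -/
noncomputable def childExcess (m : ℕ) (g r : ℕ → ℝ) (s : ι → ℝ) (X : Finset ι) : ℝ :=
  ∑ i ∈ fchFin m g r (zdia m g r s X), ∑ J ∈ H m g r s i X,
    s J * (r i / g i - r (zdia m g r s X) / g (zdia m g r s X))

lemma charge_of_mem_T (hi : i ∈ T m g r (zdia m g r s X)) (hne : i ≠ zdia m g r s X)
    (hJ : mty m g s J ∈ A m g r i) : charge m g r s X J = s J * (r i / g i) := by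
  have hJ' : mty m g s J ∉ A m g r (zdia m g r s X) := fun h =>
    Set.disjoint_left.mp (disjoint_A_of_mem_T hi self_mem_T hne) hJ h
  simp only [charge, if_neg hJ', idxT_eq hi hJ]

lemma charge_of_le (hJ : mty m g s J ∈ A m g r (zdia m g r s X))
    (hle : g (zdia m g r s X) ≤ SH m g r s X (zdia m g r s X)) :
    charge m g r s X J = s J * (r (zdia m g r s X) / g (zdia m g r s X)) := by
  simp only [charge, if_pos hJ, if_pos hle]

lemma sum_charge_H_of_le (hle : g (zdia m g r s X) ≤ SH m g r s X (zdia m g r s X)) :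
    ∑ J ∈ H m g r s (zdia m g r s X) X, charge m g r s X J
      = SH m g r s X (zdia m g r s X) * (r (zdia m g r s X) / g (zdia m g r s X)) :=
  sum_eq_Ssum_mul fun _ hJ => charge_of_le (mem_filter.mp hJ).2 hle

variable (hlt : SH m g r s X (zdia m g r s X) < g (zdia m g r s X))
include hlt

lemma charge_of_lt_of_eq (hc : r (zdia m g r s X) < childCost m g r s X)
    (hzd : zdia m g r s X ∈ A m g r (zdia m g r s X)) (hJ : mty m g s J = zdia m g r s X) :
    charge m g r s X J = s J * (r (zdia m g r s X) / g (zdia m g r s X)) := by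
  unfold childCost exactTop at hc
  simp only [charge, hJ, if_pos hzd, if_neg hlt.not_ge, if_pos hc, if_true]

lemma charge_of_lt_of_p_eq (hc : r (zdia m g r s X) < childCost m g r s X)
    (hzd : 0 < zdia m g r s X) (hi : p m g r i = zdia m g r s X)
    (hJ : mty m g s J ∈ A m g r i) :
    charge m g r s X J = s J * (r i / g i - (r i / g i - r (zdia m g r s X) / g (zdia m g r s X))
      * ((childCost m g r s X - r (zdia m g r s X)) / childExcess m g r s X)) := by
  have hne : mty m g s J ≠ zdia m g r s X := fun h => not_mem_A_of_p_eq hzd hi (h ▸ hJ)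
  unfold childCost exactTop at hc
  simp only [charge, if_pos (mem_A_of_p_eq hzd hi hJ), if_neg hlt.not_ge, if_pos hc, if_neg hne,
    chil_eq hzd hi hJ]
  rfl

lemma charge_of_ge_of_eq (hc : ¬ r (zdia m g r s X) < childCost m g r s X)
    (hzd : zdia m g r s X ∈ A m g r (zdia m g r s X)) (hJ : mty m g s J = zdia m g r s X) :
    charge m g r s X J = s J * (r (zdia m g r s X) / g (zdia m g r s X)) *
      (1 + (r (zdia m g r s X) - childCost m g r s X) /
        (Ssum s (exactTop m g r s X) * (r (zdia m g r s X) / g (zdia m g r s X)))) := by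
  unfold childCost exactTop at hc
  simp only [charge, hJ, if_pos hzd, if_neg hlt.not_ge, if_neg hc, if_true]
  rfl

lemma charge_of_ge_of_p_eq (hc : ¬ r (zdia m g r s X) < childCost m g r s X)
    (hzd : 0 < zdia m g r s X) (hi : p m g r i = zdia m g r s X)
    (hJ : mty m g s J ∈ A m g r i) : charge m g r s X J = s J * (r i / g i) := by
  have hne : mty m g s J ≠ zdia m g r s X := fun h => not_mem_A_of_p_eq hzd hi (h ▸ hJ)
  unfold childCost exactTop at hc
  simp only [charge, if_pos (mem_A_of_p_eq hzd hi hJ), if_neg hlt.not_ge, if_neg hc, if_neg hne,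
    chil_eq hzd hi hJ]

end Charge

section ChargeSums

variable {ι : Type*} {m : ℕ} {g r : ℕ → ℝ} {s : ι → ℝ} {X : Finset ι}
variable (hm : 1 ≤ m) (hX : X.Nonempty) (hs : ∀ J ∈ X, 0 < s J ∧ s J ≤ g m)
include hm hX hs

lemma sum_H_zdia_eq (F : ι → ℝ) :
    ∑ J ∈ H m g r s (zdia m g r s X) X, F J = ∑ J ∈ exactTop m g r s X, F J
      + ∑ i ∈ fchFin m g r (zdia m g r s X), ∑ J ∈ H m g r s i X, F J := by
  obtain ⟨hzd1, hzd2⟩ := zdia_mem_Icc (r := r) hm hX hs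
  have hzdA : zdia m g r s X ∈ A m g r (zdia m g r s X) := ⟨hzd1, hzd2, self_mem_P⟩
  rw [← sum_filter_add_sum_filter_not _ fun J => mty m g s J = zdia m g r s X]
  congr 1
  · congr 1
    ext J
    simp only [H, exactTop, mem_filter, and_assoc]
    exact and_congr_right fun _ => ⟨fun h => h.2, fun h => ⟨h ▸ hzdA, h⟩⟩
  refine sum_eq_sum_sum_of_existsUnique (fun i hi J hJ => ?_) (fun J hJ => ?_) F
  · obtain ⟨-, hpi⟩ := mem_filter.mp hi
    obtain ⟨hJX, hJA⟩ := mem_filter.mp hJ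
    exact mem_filter.mpr ⟨mem_filter.mpr ⟨hJX, mem_A_of_p_eq hzd1 hpi hJA⟩,
      fun h => not_mem_A_of_p_eq hzd1 hpi (h ▸ hJA)⟩
  · simp only [H, mem_filter] at hJ
    obtain ⟨⟨hJX, hJA⟩, hne⟩ := hJ
    obtain ⟨i, hpi, hJi⟩ := exists_p_eq_mem_A hJA hne
    have hi : i ∈ fchFin m g r (zdia m g r s X) :=
      mem_filter.mpr ⟨mem_Icc.mpr ⟨hJi.1.trans (le_of_mem_P hJi.2.2),
        le_m_of_mem_P hJi.2.1 hJi.2.2⟩, hpi⟩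
    refine ⟨i, ⟨hi, mem_filter.mpr ⟨hJX, hJi⟩⟩, fun j ⟨hj, hJj⟩ => ?_⟩
    by_contra hji
    exact Set.disjoint_left.mp (disjoint_A_of_p_eq hzd1 (mem_filter.mp hj).2 hpi hji)
      (mem_filter.mp hJj).2 hJi

lemma sum_charge_eq :
    ∑ J ∈ X, charge m g r s X J
      = ∑ i ∈ (TIcc m g r (zdia m g r s X)).erase (zdia m g r s X), SH m g r s X i * (r i / g i)
        + ∑ J ∈ H m g r s (zdia m g r s X) X, charge m g r s X J := by
  obtain ⟨hzd1, hzd2⟩ := zdia_mem_Icc (r := r) hm hX hs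
  rw [sum_eq_sum_TIcc_sum_H hm hX hs, ← add_sum_erase _ _ (self_mem_TIcc hzd1 hzd2),
    add_comm]
  congr 1
  refine sum_congr rfl fun i hi => sum_eq_Ssum_mul fun J hJ => ?_
  exact charge_of_mem_T ((mem_TIcc hzd1 hzd2).mp (mem_of_mem_erase hi))
    (ne_of_mem_erase hi) (mem_filter.mp hJ).2

lemma SH_zdia_pos : 0 < SH m g r s X (zdia m g r s X) := by
  obtain ⟨J, hJ, hJk⟩ := exists_mem_eq_sup X hX (mty m g s)
  obtain ⟨hk1, hk2⟩ := k0f_mem_Icc hm hX hs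
  have hJH : J ∈ H m g r s (zdia m g r s X) X := mem_filter.mpr
    ⟨hJ, hJk ▸ ⟨hk1, hk2, (zdia_spec hm hX hs).1⟩⟩
  exact sum_pos' (fun J hJ => (hs J (mem_filter.mp hJ).1).1.le) ⟨J, hJH, (hs J hJ).1⟩

lemma childExcess_eq : childExcess m g r s X = childCost m g r s X
    - SH m g r s X (zdia m g r s X) * (r (zdia m g r s X) / g (zdia m g r s X)) := by
  have hSH := sum_H_zdia_eq (r := r) hm hX hs s
  simp only [childExcess, childCost, SH, Ssum, mul_sub, sum_sub_distrib, ← sum_mul] at hSH ⊢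
  rw [hSH]
  ring

end ChargeSums

section TopCharge

variable {ι : Type*} {m : ℕ} {g r : ℕ → ℝ} {s : ι → ℝ} {X : Finset ι}
variable (hM : MachineTypes m g r) (hX : X.Nonempty) (hs : ∀ J ∈ X, 0 < s J ∧ s J ≤ g m)
  (hlt : SH m g r s X (zdia m g r s X) < g (zdia m g r s X))
include hM hX hs hlt

lemma sum_charge_H_of_lt_of_lt (hc : r (zdia m g r s X) < childCost m g r s X) :
    ∑ J ∈ H m g r s (zdia m g r s X) X, charge m g r s X J = r (zdia m g r s X) := by
  obtain ⟨hzd1, hzd2⟩ := zdia_mem_Icc (r := r) hM.one_le hX hs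
  set zd := zdia m g r s X
  set α := (childCost m g r s X - r zd) / childExcess m g r s X
  have hD : 0 < childExcess m g r s X := by
    have hr : g zd * (r zd / g zd) = r zd := mul_div_cancel₀ _ (hM.g_pos hzd1 hzd2).ne'
    rw [childExcess_eq hM.one_le hX hs]
    nlinarith [hM.rate_pos hzd1 hzd2]
  have hchild : ∀ i ∈ fchFin m g r zd, ∑ J ∈ H m g r s i X, charge m g r s X J
      = SH m g r s X i * (r i / g i)
        - (∑ J ∈ H m g r s i X, s J * (r i / g i - r zd / g zd)) * α := by
    intro i hi
    rw [sum_congr rfl fun J (hJ : J ∈ H m g r s i X) => charge_of_lt_of_p_eq hlt hc hzd1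
      (mem_filter.mp hi).2 (mem_filter.mp hJ).2, SH, Ssum, sum_mul,
      sum_mul, ← sum_sub_distrib]
    exact sum_congr rfl fun J _ => by ring
  rw [sum_H_zdia_eq hM.one_le hX hs, sum_congr rfl hchild, sum_sub_distrib,
    ← sum_mul, sum_eq_Ssum_mul fun J (hJ : J ∈ exactTop m g r s X) => charge_of_lt_of_eq hlt hc
      ⟨hzd1, hzd2, self_mem_P⟩ (mem_filter.mp hJ).2]
  change _ + (_ - childExcess m g r s X * α) = _
  rw [mul_div_cancel₀ _ hD.ne', childCost]
  ring

lemma sum_charge_H_of_lt_of_ge (hc : ¬ r (zdia m g r s X) < childCost m g r s X) :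
    ∑ J ∈ H m g r s (zdia m g r s X) X, charge m g r s X J
      = ∑ J ∈ exactTop m g r s X, charge m g r s X J + (childCost m g r s X
        - Ssum s (exactTop m g r s X) * (r (zdia m g r s X) / g (zdia m g r s X))) := by
  obtain ⟨hzd1, -⟩ := zdia_mem_Icc (r := r) hM.one_le hX hs
  rw [sum_H_zdia_eq hM.one_le hX hs, childCost, add_sub_cancel_left]
  congr 1
  exact sum_congr rfl fun i hi => sum_eq_Ssum_mul fun J (hJ : J ∈ H m g r s i X) =>
    charge_of_ge_of_p_eq hlt hc hzd1 (mem_filter.mp hi).2 (mem_filter.mp hJ).2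

/-- If no job has exact type `z⋄`, the `β*` top-up has no job to go to and the subtree is
charged only `c`. -/
lemma sum_charge_H_of_lt :
    ∑ J ∈ H m g r s (zdia m g r s X) X, charge m g r s X J = r (zdia m g r s X)
    ∨ exactTop m g r s X = ∅ ∧ ∑ J ∈ H m g r s (zdia m g r s X) X, charge m g r s X J
        = childCost m g r s X ∧ childCost m g r s X ≤ r (zdia m g r s X) := by
  obtain ⟨hzd1, hzd2⟩ := zdia_mem_Icc (r := r) hM.one_le hX hs
  by_cases hc : r (zdia m g r s X) < childCost m g r s X
  · exact Or.inl (sum_charge_H_of_lt_of_lt hM hX hs hlt hc)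
  rw [sum_charge_H_of_lt_of_ge hM hX hs hlt hc]
  rcases (exactTop m g r s X).eq_empty_or_nonempty with he | hne
  · refine Or.inr ⟨he, ?_, not_lt.mp hc⟩
    rw [he, sum_empty, Ssum, sum_empty]
    ring
  left
  have hpos : 0 < Ssum s (exactTop m g r s X) * (r (zdia m g r s X) / g (zdia m g r s X)) :=
    mul_pos (sum_pos (fun J hJ => (hs J (mem_filter.mp hJ).1).1) hne)
      (hM.rate_pos hzd1 hzd2)
  rw [sum_eq_Ssum_mul fun J (hJ : J ∈ exactTop m g r s X) => (charge_of_ge_of_eq hlt hc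
    ⟨hzd1, hzd2, self_mem_P⟩ (mem_filter.mp hJ).2).trans (mul_assoc _ _ _),
    ← mul_assoc, mul_add, mul_one, mul_div_cancel₀ _ hpos.ne']
  ring

end TopCharge

section NoExactTopJob

variable {ι : Type*} {m : ℕ} {g r : ℕ → ℝ} {s : ι → ℝ} {X : Finset ι}

lemma zdia_le_of_decent {z : ℕ} (hz : z ∈ P m g r (k0f m g s X)) (hdec : decent m g r s X z) :
    zdia m g r s X ≤ z :=
  Nat.sInf_le ⟨hz, hdec⟩

lemma exists_p_eq_zdia_not_decent (hm : 1 ≤ m) (hX : X.Nonempty)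
    (hs : ∀ J ∈ X, 0 < s J ∧ s J ≤ g m) (he : exactTop m g r s X = ∅) :
    ∃ z' ∈ P m g r (k0f m g s X), p m g r z' = zdia m g r s X ∧ ¬ decent m g r s X z' := by
  have hk0 : zdia m g r s X ≠ k0f m g s X := by
    obtain ⟨J, hJ, hJk⟩ := exists_mem_eq_sup X hX (mty m g s)
    intro h
    have : J ∈ exactTop m g r s X := mem_filter.mpr ⟨hJ, hJk.symm.trans h.symm⟩
    simp [he] at this
  obtain ⟨z', hz'P, hdz', hpz'⟩ := exists_p_eq_of_mem_P (zdia_spec (r := r) hm hX hs).1 hk0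
  refine ⟨z', hz'P, hpz', fun hdec => ?_⟩
  have := zdia_le_of_decent hz'P hdec
  have := lt_of_p_eq hpz' (zdia_mem_Icc (r := r) hm hX hs).1
  omega

lemma r_zdia_le_of_exactTop_eq_empty (hM : MachineTypes m g r) (hX : X.Nonempty)
    (hs : ∀ J ∈ X, 0 < s J ∧ s J ≤ g m) (he : exactTop m g r s X = ∅) :
    r (zdia m g r s X) ≤ 8 / 7 * (childCost m g r s X + ∑ i ∈ (TIcc m g r (zdia m g r s X)).erase
      (zdia m g r s X), SH m g r s X i * (r i / g i)) := by
  obtain ⟨hk1, hk2⟩ := k0f_mem_Icc hM.one_le hX hs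
  obtain ⟨hzd1, hzd2⟩ := zdia_mem_Icc (r := r) hM.one_le hX hs
  have hs' : ∀ J ∈ X, 0 ≤ s J := fun J hJ => (hs J hJ).1.le
  obtain ⟨z', hz'P, hpz', hnd⟩ := exists_p_eq_zdia_not_decent hM.one_le hX hs he
  have hz'1 : 1 ≤ z' := hk1.trans (le_of_mem_P hz'P)
  have hz'2 : z' ≤ m := le_m_of_mem_P hk2 hz'P
  have hviol := r_lt_sum_cn_mul_r_of_not_decent hM hs' hz'1 hz'2 hzd1 hpz' hnd
  have hcost := sum_TIcc_cn_mul_r_le_of_p_eq hM hs' (X := X) hz'1 hz'2 hzd1 hpz'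
  have h8 := hM.eight_mul_r_le hz'1 (lt_of_p_eq hpz' hzd1) hzd2
  have hc : ∑ i ∈ fchFin m g r (zdia m g r s X), SH m g r s X i * (r i / g i)
      = childCost m g r s X := by
    rw [childCost, he, Ssum, sum_empty, zero_mul, zero_add]
  linarith

end NoExactTopJob

section Bounds

variable {ι : Type*} {m : ℕ} {g r : ℕ → ℝ} {s : ι → ℝ} {X : Finset ι}
variable (hM : MachineTypes m g r) (hX : X.Nonempty) (hs : ∀ J ∈ X, 0 < s J ∧ s J ≤ g m)
include hM hX hs

lemma sum_charge_H_bounds_of_le (hle : g (zdia m g r s X) ≤ SH m g r s X (zdia m g r s X)) :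
    ∑ J ∈ H m g r s (zdia m g r s X) X, charge m g r s X J
        ≤ ⌈SH m g r s X (zdia m g r s X) / g (zdia m g r s X)⌉₊ * r (zdia m g r s X)
      ∧ ⌈SH m g r s X (zdia m g r s X) / g (zdia m g r s X)⌉₊ * r (zdia m g r s X)
        ≤ 2 * ∑ J ∈ H m g r s (zdia m g r s X) X, charge m g r s X J := by
  obtain ⟨hzd1, hzd2⟩ := zdia_mem_Icc (r := r) hM.one_le hX hs
  have hg := hM.g_pos hzd1 hzd2
  have hρ := hM.rate_pos hzd1 hzd2
  set x := SH m g r s X (zdia m g r s X) / g (zdia m g r s X)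
  have hr : ⌈x⌉₊ * r (zdia m g r s X)
      = ⌈x⌉₊ * g (zdia m g r s X) * (r (zdia m g r s X) / g (zdia m g r s X)) := by
    field_simp
  have hx : x * g (zdia m g r s X) = SH m g r s X (zdia m g r s X) := div_mul_cancel₀ _ hg.ne'
  have hx1 : 1 ≤ x := (one_le_div hg).mpr hle
  have hceil := Nat.ceil_le_two_mul (a := x) (by linarith)
  rw [sum_charge_H_of_le hle, hr]
  constructor
  · exact mul_le_mul_of_nonneg_right (by nlinarith [Nat.le_ceil x]) hρ.le
  · calc (⌈x⌉₊ : ℝ) * g (zdia m g r s X) * (r (zdia m g r s X) / g (zdia m g r s X))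
        ≤ 2 * x * g (zdia m g r s X) * (r (zdia m g r s X) / g (zdia m g r s X)) := by gcongr
      _ = _ := by rw [← hx]; ring

lemma sum_charge_H_bounds_of_lt (hlt : SH m g r s X (zdia m g r s X) < g (zdia m g r s X)) :
    ∑ J ∈ H m g r s (zdia m g r s X) X, charge m g r s X J
        ≤ ⌈SH m g r s X (zdia m g r s X) / g (zdia m g r s X)⌉₊ * r (zdia m g r s X)
      ∧ ⌈SH m g r s X (zdia m g r s X) / g (zdia m g r s X)⌉₊ * r (zdia m g r s X)
        ≤ 15 / 7 * ∑ J ∈ H m g r s (zdia m g r s X) X, charge m g r s X J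
          + 8 / 7 * ∑ i ∈ (TIcc m g r (zdia m g r s X)).erase (zdia m g r s X),
            SH m g r s X i * (r i / g i) := by
  obtain ⟨hzd1, hzd2⟩ := zdia_mem_Icc (r := r) hM.one_le hX hs
  have hs' : ∀ J ∈ X, 0 ≤ s J := fun J hJ => (hs J hJ).1.le
  have hg := hM.g_pos hzd1 hzd2
  have hceil : ⌈SH m g r s X (zdia m g r s X) / g (zdia m g r s X)⌉₊ = 1 :=
    (Nat.ceil_eq_iff one_ne_zero).mpr ⟨by simpa using div_pos (SH_zdia_pos hM.one_le hX hs) hg,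
      by simpa using (div_le_one hg).mpr hlt.le⟩
  have hrest := sum_erase_SH_mul_rate_nonneg hM hs' hzd1 hzd2 (X := X)
  have hr := hM.r_pos hzd1 hzd2
  rw [hceil, Nat.cast_one, one_mul]
  rcases sum_charge_H_of_lt hM hX hs hlt with h | ⟨he, h, hc⟩
  · rw [h]
    constructor <;> linarith
  · have hhard := r_zdia_le_of_exactTop_eq_empty hM hX hs he
    have hc0 : 0 ≤ childCost m g r s X := by
      rw [childCost, he, Ssum, sum_empty, zero_mul, zero_add]
      exact sum_nonneg fun i hi => SH_mul_rate_nonneg hM hs'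
        (mem_Icc.mp (mem_filter.mp hi).1).1
        (mem_Icc.mp (mem_filter.mp hi).1).2
    rw [h]
    constructor <;> linarith

lemma sum_charge_H_bounds :
    ∑ J ∈ H m g r s (zdia m g r s X) X, charge m g r s X J
        ≤ ⌈SH m g r s X (zdia m g r s X) / g (zdia m g r s X)⌉₊ * r (zdia m g r s X)
      ∧ ⌈SH m g r s X (zdia m g r s X) / g (zdia m g r s X)⌉₊ * r (zdia m g r s X)
        ≤ 15 / 7 * ∑ J ∈ H m g r s (zdia m g r s X) X, charge m g r s X J
          + 8 / 7 * ∑ i ∈ (TIcc m g r (zdia m g r s X)).erase (zdia m g r s X),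
            SH m g r s X i * (r i / g i) := by
  obtain ⟨hzd1, hzd2⟩ := zdia_mem_Icc (r := r) hM.one_le hX hs
  have hs' : ∀ J ∈ X, 0 ≤ s J := fun J hJ => (hs J hJ).1.le
  by_cases hle : g (zdia m g r s X) ≤ SH m g r s X (zdia m g r s X)
  · obtain ⟨h₁, h₂⟩ := sum_charge_H_bounds_of_le hM hX hs hle
    have h₀ : 0 ≤ ∑ J ∈ H m g r s (zdia m g r s X) X, charge m g r s X J := by
      rw [sum_charge_H_of_le hle]
      exact SH_mul_rate_nonneg hM hs' hzd1 hzd2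
    have := sum_erase_SH_mul_rate_nonneg hM hs' hzd1 hzd2 (X := X)
    exact ⟨h₁, by linarith⟩
  · exact sum_charge_H_bounds_of_lt hM hX hs (not_le.mp hle)

end Bounds

/-- For a nonempty finite set `𝒥` of jobs with sizes in
`(0, g m]`:
`(1/2)·∑_{J ∈ 𝒥} r̃(𝒥)(J) ≤ ∑_{z ∈ T(z⋄)} cn_{z⋄}(z)·r z ≤ (15/7)·∑_{J ∈ 𝒥} r̃(𝒥)(J)`. -/
theorem statement_13 {ι : Type*} (m : ℕ) (g r : ℕ → ℝ) (s : ι → ℝ) (𝒥 : Finset ι)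
    (hm : 1 ≤ m)
    (hg1 : 0 < g 1) (hr1 : 0 < r 1)
    (hg : ∀ i j, 1 ≤ i → i < j → j ≤ m → g i < g j)
    (hr : ∀ i j, 1 ≤ i → i < j → j ≤ m → r i < r j)
    (hr8 : ∀ z, 1 ≤ z → z ≤ m → ∃ n : ℤ, r z = (8 : ℝ) ^ n)
    (hJ : 𝒥.Nonempty)
    (hs : ∀ J ∈ 𝒥, 0 < s J ∧ s J ≤ g m) :
    1 / 2 * (∑ J ∈ 𝒥, charge m g r s 𝒥 J)
      ≤ (∑ z ∈ TIcc m g r (zdia m g r s 𝒥),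
          cn m g r s 𝒥 (zdia m g r s 𝒥) z * r z) ∧
    (∑ z ∈ TIcc m g r (zdia m g r s 𝒥),
        cn m g r s 𝒥 (zdia m g r s 𝒥) z * r z)
      ≤ 15 / 7 * (∑ J ∈ 𝒥, charge m g r s 𝒥 J) := by
  have hM : MachineTypes m g r := ⟨hm, hg1, hr1, hg, hr, hr8⟩
  have hs' : ∀ J ∈ 𝒥, 0 ≤ s J := fun J hJ => (hs J hJ).1.le
  obtain ⟨hzd1, hzd2⟩ := zdia_mem_Icc (r := r) hm hJ hs
  obtain ⟨htop₁, htop₂⟩ := sum_charge_H_bounds hM hJ hs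
  have hcn := sum_le_sum fun i hi =>
    cn_mul_r_le hM hs' hzd1 hzd2 (X := 𝒥) (mem_of_mem_erase hi) (ne_of_mem_erase hi)
  have hdeficit := sum_SH_mul_rate_le hM hs' hzd1 hzd2 (X := 𝒥)
  rw [sum_charge_eq hm hJ hs, sum_TIcc_cn_mul_r hzd1 hzd2]
  constructor <;> linarith

end BSHM
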